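/- arXiv:2202.09667 — 4 statements merged into one kernel-verified Lean document; each statement's English description precedes it below -/
import Mathlib

section
/- The function φ is concave on (0, ∞). Moreover, if μ is not a Dirac measure (i.e., there is no c ∈ [0,1] with μ({c}) = 1), then φ is strictly concave on (0, ∞). -/
/-! `α log W₀(α)` is the perspective `α Λ(1/α)` of the cumulant generating function
`Λ(t) = log ∫ exp (-t r) dμ(r)`. Hölder's inequality makes `Λ` convex, and strictly convex unless
`r` is `μ`-a.e. constant, since equality in Hölder forces the two integrands to be proportional.
Perspectives of (strictly) convex functions are (strictly) convex, and the term `αδ` is linear. -/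

open MeasureTheory Real Set

/-- `W_j(α) = ∫ r^j exp(-r/α) dμ(r)`. -/
noncomputable def Wj (μ : Measure ℝ) (j : ℕ) (α : ℝ) : ℝ :=
  ∫ r, r ^ j * Real.exp (-r / α) ∂μ

/-- `φ(α) = -α log W_0(α) - α δ`. -/
noncomputable def phi (μ : Measure ℝ) (δ : ℝ) (α : ℝ) : ℝ :=
  -α * Real.log (Wj μ 0 α) - α * δ

open ProbabilityTheory

section Integral

variable {Ω : Type*} [MeasurableSpace Ω] {μ : Measure Ω} {f g : Ω → ℝ}

theorem integral_lt_integral_of_ae_le_of_measure_setOf_lt_ne_zero (hf : Integrable f μ)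
    (hg : Integrable g μ) (hle : f ≤ᵐ[μ] g) (hlt : μ {x | f x < g x} ≠ 0) :
    ∫ x, f x ∂μ < ∫ x, g x ∂μ := by
  rw [← sub_pos, ← integral_sub hg hf,
    integral_pos_iff_support_of_nonneg_ae (hle.mono fun x => sub_nonneg.2) (hg.sub hf)]
  exact pos_iff_ne_zero.2 (mt (measure_mono_null fun x hx => (sub_pos.2 hx).ne') hlt)

theorem integral_pos_of_forall_pos [NeZero μ] (hf : Integrable f μ) (hf0 : ∀ x, 0 < f x) :
    0 < ∫ x, f x ∂μ := by
  rw [integral_pos_iff_support_of_nonneg (fun x => (hf0 x).le) hf,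
    Function.support_eq_univ fun x => (hf0 x).ne']
  simp [NeZero.ne μ]

end Integral

section WeightedMean

variable {p q A B a b : ℝ}

theorem rpow_mul_rpow_eq_mul_div_rpow_mul_div_rpow (hp : 0 ≤ p) (hq : 0 ≤ q) (hA : 0 < A)
    (hB : 0 < B) : p ^ a * q ^ b = A ^ a * B ^ b * ((p / A) ^ a * (q / B) ^ b) := by
  rw [div_rpow hp hA.le, div_rpow hq hB.le]
  have := rpow_pos_of_pos hA a
  have := rpow_pos_of_pos hB b
  field_simp

theorem rpow_mul_rpow_le_mul_weighted_div (hp : 0 ≤ p) (hq : 0 ≤ q) (hA : 0 < A) (hB : 0 < B)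
    (ha : 0 ≤ a) (hb : 0 ≤ b) (hab : a + b = 1) :
    p ^ a * q ^ b ≤ A ^ a * B ^ b * (a * (p / A) + b * (q / B)) := by
  rw [rpow_mul_rpow_eq_mul_div_rpow_mul_div_rpow hp hq hA hB]
  gcongr
  exact geom_mean_le_arith_mean2_weighted ha hb (div_nonneg hp hA.le) (div_nonneg hq hB.le) hab

theorem rpow_mul_rpow_lt_mul_weighted_div_iff (hp : 0 ≤ p) (hq : 0 ≤ q) (hA : 0 < A)
    (hB : 0 < B) (ha : 0 < a) (hb : 0 < b) (hab : a + b = 1) :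
    p ^ a * q ^ b < A ^ a * B ^ b * (a * (p / A) + b * (q / B)) ↔ p / A ≠ q / B := by
  rw [rpow_mul_rpow_eq_mul_div_rpow_mul_div_rpow hp hq hA hB,
    mul_lt_mul_iff_right₀ (by positivity)]
  exact geom_mean_lt_arith_mean2_weighted_iff_of_pos ha hb (div_nonneg hp hA.le)
    (div_nonneg hq hB.le) hab

theorem log_rpow_mul_rpow (hp : 0 < p) (hq : 0 < q) (a b : ℝ) :
    log (p ^ a * q ^ b) = a * log p + b * log q := by
  rw [log_mul (rpow_pos_of_pos hp a).ne' (rpow_pos_of_pos hq b).ne', log_rpow hp, log_rpow hq]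

end WeightedMean

section Holder

variable {Ω : Type*} [MeasurableSpace Ω] {μ : Measure Ω} [NeZero μ] {f g : Ω → ℝ} {a b : ℝ}

theorem integral_mul_weighted_div_integral (hf : Integrable f μ) (hg : Integrable g μ)
    (hf0 : ∀ x, 0 < f x) (hg0 : ∀ x, 0 < g x) (hab : a + b = 1) (C : ℝ) :
    ∫ x, C * (a * (f x / ∫ y, f y ∂μ) + b * (g x / ∫ y, g y ∂μ)) ∂μ = C := by
  have hA := (integral_pos_of_forall_pos hf hf0).ne'
  have hB := (integral_pos_of_forall_pos hg hg0).ne'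
  simp_rw [mul_div_assoc']
  rw [integral_const_mul, integral_add ((hf.const_mul a).div_const _) ((hg.const_mul b).div_const _),
    integral_div, integral_div, integral_const_mul, integral_const_mul,
    mul_div_assoc, mul_div_assoc, div_self hA, div_self hB]
  simp [hab]

/-- Hölder's inequality for the exponents `1 / a` and `1 / b`. -/
theorem integral_rpow_mul_rpow_le (hf : Integrable f μ) (hg : Integrable g μ)
    (hf0 : ∀ x, 0 < f x) (hg0 : ∀ x, 0 < g x) (ha : 0 ≤ a) (hb : 0 ≤ b) (hab : a + b = 1) :
    ∫ x, f x ^ a * g x ^ b ∂μ ≤ (∫ x, f x ∂μ) ^ a * (∫ x, g x ∂μ) ^ b := by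
  set A := ∫ x, f x ∂μ
  set B := ∫ x, g x ∂μ
  have hA : 0 < A := integral_pos_of_forall_pos hf hf0
  have hB : 0 < B := integral_pos_of_forall_pos hg hg0
  calc ∫ x, f x ^ a * g x ^ b ∂μ
      ≤ ∫ x, A ^ a * B ^ b * (a * (f x / A) + b * (g x / B)) ∂μ :=
        integral_mono_of_nonneg
          (.of_forall fun x => mul_nonneg (rpow_nonneg (hf0 x).le a) (rpow_nonneg (hg0 x).le b))
          ((((hf.div_const A).const_mul a).add ((hg.div_const B).const_mul b)).const_mul _)
          (.of_forall fun x =>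
            rpow_mul_rpow_le_mul_weighted_div (hf0 x).le (hg0 x).le hA hB ha hb hab)
    _ = A ^ a * B ^ b := integral_mul_weighted_div_integral hf hg hf0 hg0 hab _

theorem integral_rpow_mul_rpow_lt (hf : Integrable f μ) (hg : Integrable g μ)
    (hf0 : ∀ x, 0 < f x) (hg0 : ∀ x, 0 < g x) (ha : 0 < a) (hb : 0 < b) (hab : a + b = 1)
    (hfg : ∀ c, ¬ f =ᵐ[μ] fun x => c * g x) :
    ∫ x, f x ^ a * g x ^ b ∂μ < (∫ x, f x ∂μ) ^ a * (∫ x, g x ∂μ) ^ b := by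
  set A := ∫ x, f x ∂μ
  set B := ∫ x, g x ∂μ
  have hA : 0 < A := integral_pos_of_forall_pos hf hf0
  have hB : 0 < B := integral_pos_of_forall_pos hg hg0
  have hgap : μ {x | f x / A ≠ g x / B} ≠ 0 := fun h => hfg (A / B) <| by
    filter_upwards [measure_eq_zero_iff_ae_notMem.1 h] with x hx
    rw [not_not, div_eq_div_iff hA.ne' hB.ne'] at hx
    field_simp
    linarith
  have hH : Integrable (fun x => A ^ a * B ^ b * (a * (f x / A) + b * (g x / B))) μ :=
    (((hf.div_const A).const_mul a).add ((hg.div_const B).const_mul b)).const_mul _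
  have hle x : f x ^ a * g x ^ b ≤ A ^ a * B ^ b * (a * (f x / A) + b * (g x / B)) :=
    rpow_mul_rpow_le_mul_weighted_div (hf0 x).le (hg0 x).le hA hB ha.le hb.le hab
  have hnonneg x : 0 ≤ f x ^ a * g x ^ b :=
    mul_nonneg (rpow_nonneg (hf0 x).le a) (rpow_nonneg (hg0 x).le b)
  have hint : Integrable (fun x => f x ^ a * g x ^ b) μ :=
    hH.mono' ((hf.aemeasurable.pow_const a).mul (hg.aemeasurable.pow_const b)).aestronglyMeasurable
      (.of_forall fun x => (norm_of_nonneg (hnonneg x)).trans_le (hle x))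
  calc ∫ x, f x ^ a * g x ^ b ∂μ
      < ∫ x, A ^ a * B ^ b * (a * (f x / A) + b * (g x / B)) ∂μ := by
        refine integral_lt_integral_of_ae_le_of_measure_setOf_lt_ne_zero hint hH
          (.of_forall hle) ?_
        simpa only [rpow_mul_rpow_lt_mul_weighted_div_iff (hf0 _).le (hg0 _).le hA hB ha hb hab]
          using hgap
    _ = A ^ a * B ^ b := integral_mul_weighted_div_integral hf hg hf0 hg0 hab _

end Holder

section CumulantGeneratingFunction

variable {Ω : Type*} [MeasurableSpace Ω] {μ : Measure Ω} {X : Ω → ℝ}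

theorem exp_mul_eq_exp_mul_rpow_mul_exp_mul_rpow (t₁ t₂ a b x : ℝ) :
    exp ((a * t₁ + b * t₂) * x) = exp (t₁ * x) ^ a * exp (t₂ * x) ^ b := by
  rw [← exp_mul, ← exp_mul, ← exp_add]
  ring_nf

theorem not_exp_mul_ae_eq_const_mul_exp_mul (hX : ∀ c, ¬ X =ᵐ[μ] fun _ => c) {t₁ t₂ : ℝ}
    (ht : t₁ ≠ t₂) (c : ℝ) :
    ¬ (fun ω => exp (t₁ * X ω)) =ᵐ[μ] fun ω => c * exp (t₂ * X ω) := fun h =>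
  hX (log c / (t₁ - t₂)) <| by
    filter_upwards [h] with ω hω
    have hc : c ≠ 0 := by
      rintro rfl
      exact (exp_pos _).ne' (hω.trans (zero_mul _))
    have := congrArg log hω
    rw [log_exp, log_mul hc (exp_pos _).ne', log_exp] at this
    rw [eq_div_iff (sub_ne_zero.2 ht)]
    linarith

variable [NeZero μ]

theorem convexOn_cgf : ConvexOn ℝ (integrableExpSet X μ) (cgf X μ) := by
  refine ⟨convex_integrableExpSet, fun t₁ ht₁ t₂ ht₂ a b ha hb hab => ?_⟩
  have hmgf : mgf X μ (a • t₁ + b • t₂) ≤ mgf X μ t₁ ^ a * mgf X μ t₂ ^ b := by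
    simp only [mgf, smul_eq_mul, exp_mul_eq_exp_mul_rpow_mul_exp_mul_rpow]
    exact integral_rpow_mul_rpow_le ht₁ ht₂ (fun _ => exp_pos _) (fun _ => exp_pos _) ha hb hab
  have h₁ := mgf_pos' (NeZero.ne μ) ht₁
  have h₂ := mgf_pos' (NeZero.ne μ) ht₂
  calc cgf X μ (a • t₁ + b • t₂)
      ≤ log (mgf X μ t₁ ^ a * mgf X μ t₂ ^ b) :=
        log_le_log (mgf_pos' (NeZero.ne μ) (convex_integrableExpSet ht₁ ht₂ ha hb hab)) hmgf
    _ = a • cgf X μ t₁ + b • cgf X μ t₂ := log_rpow_mul_rpow h₁ h₂ a b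

theorem strictConvexOn_cgf (hX : ∀ c, ¬ X =ᵐ[μ] fun _ => c) :
    StrictConvexOn ℝ (integrableExpSet X μ) (cgf X μ) := by
  refine ⟨convex_integrableExpSet, fun t₁ ht₁ t₂ ht₂ ht a b ha hb hab => ?_⟩
  have hmgf : mgf X μ (a • t₁ + b • t₂) < mgf X μ t₁ ^ a * mgf X μ t₂ ^ b := by
    simp only [mgf, smul_eq_mul, exp_mul_eq_exp_mul_rpow_mul_exp_mul_rpow]
    exact integral_rpow_mul_rpow_lt ht₁ ht₂ (fun _ => exp_pos _) (fun _ => exp_pos _) ha hb hab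
      (not_exp_mul_ae_eq_const_mul_exp_mul hX ht)
  have h₁ := mgf_pos' (NeZero.ne μ) ht₁
  have h₂ := mgf_pos' (NeZero.ne μ) ht₂
  calc cgf X μ (a • t₁ + b • t₂)
      < log (mgf X μ t₁ ^ a * mgf X μ t₂ ^ b) :=
        log_lt_log (mgf_pos' (NeZero.ne μ) (convex_integrableExpSet ht₁ ht₂ ha.le hb.le hab)) hmgf
    _ = a • cgf X μ t₁ + b • cgf X μ t₂ := log_rpow_mul_rpow h₁ h₂ a b

end CumulantGeneratingFunction

section Perspective

variable {f : ℝ → ℝ} {x y a b : ℝ}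

theorem inv_add_eq_weighted_inv (hx : 0 < x) (hy : 0 < y) (hz : 0 < a * x + b * y)
    (hab : a + b = 1) :
    (a * x + b * y)⁻¹ = a * x / (a * x + b * y) * x⁻¹ + b * y / (a * x + b * y) * y⁻¹ := by
  field_simp
  exact hab.symm

theorem ConvexOn.mul_comp_inv (hf : ConvexOn ℝ (Ioi 0) f) :
    ConvexOn ℝ (Ioi 0) fun x => x * f x⁻¹ := by
  refine ⟨convex_Ioi 0, fun x hx y hy a b ha hb hab => ?_⟩
  have hz : 0 < a * x + b * y := convex_Ioi 0 hx hy ha hb hab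
  rw [mem_Ioi] at hx hy
  have hw : a * x / (a * x + b * y) + b * y / (a * x + b * y) = 1 := by field_simp
  have := hf.2 (inv_pos.2 hx) (inv_pos.2 hy) (by positivity) (by positivity) hw
  simp only [smul_eq_mul, ← inv_add_eq_weighted_inv hx hy hz hab] at this ⊢
  calc (a * x + b * y) * f (a * x + b * y)⁻¹
      ≤ (a * x + b * y) * (a * x / (a * x + b * y) * f x⁻¹ + b * y / (a * x + b * y) * f y⁻¹) :=
        mul_le_mul_of_nonneg_left this hz.le
    _ = a * (x * f x⁻¹) + b * (y * f y⁻¹) := by field_simp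

theorem StrictConvexOn.mul_comp_inv (hf : StrictConvexOn ℝ (Ioi 0) f) :
    StrictConvexOn ℝ (Ioi 0) fun x => x * f x⁻¹ := by
  refine ⟨convex_Ioi 0, fun x hx y hy hxy a b ha hb hab => ?_⟩
  have hz : 0 < a * x + b * y := convex_Ioi 0 hx hy ha.le hb.le hab
  rw [mem_Ioi] at hx hy
  have hw : a * x / (a * x + b * y) + b * y / (a * x + b * y) = 1 := by field_simp
  have := hf.2 (inv_pos.2 hx) (inv_pos.2 hy) (inv_injective.ne hxy) (by positivity)
    (by positivity) hw
  simp only [smul_eq_mul, ← inv_add_eq_weighted_inv hx hy hz hab] at this ⊢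
  calc (a * x + b * y) * f (a * x + b * y)⁻¹
      < (a * x + b * y) * (a * x / (a * x + b * y) * f x⁻¹ + b * y / (a * x + b * y) * f y⁻¹) :=
        mul_lt_mul_of_pos_left this hz
    _ = a * (x * f x⁻¹) + b * (y * f y⁻¹) := by field_simp

end Perspective

theorem Ici_subset_integrableExpSet_neg {Ω : Type*} [MeasurableSpace Ω] {μ : Measure Ω}
    [IsFiniteMeasure μ] {X : Ω → ℝ} (hX : 0 ≤ᵐ[μ] X) (hXm : AEMeasurable X μ) :
    Ici 0 ⊆ integrableExpSet (fun ω => -X ω) μ := fun t ht =>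
  (integrable_const 1).mono' (by fun_prop) <| by
    filter_upwards [hX] with ω hω
    rw [norm_of_nonneg (exp_pos _).le, exp_le_one_iff]
    exact mul_nonpos_of_nonneg_of_nonpos ht (neg_nonpos.2 hω)

theorem not_neg_ae_eq_const {μ : Measure ℝ} [IsProbabilityMeasure μ]
    (hsupp : ∀ᵐ r ∂μ, r ∈ Icc (0 : ℝ) 1) (hμ : ¬ ∃ c ∈ Icc (0 : ℝ) 1, μ {c} = 1) (c : ℝ) :
    ¬ (fun r => -r) =ᵐ[μ] fun _ => c := fun h => by
  have hc : ∀ᵐ r ∂μ, r = -c := h.mono fun r hr => by linarith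
  obtain ⟨r, hr, hrc⟩ := (hsupp.and hc).exists
  refine hμ ⟨-c, hrc ▸ hr, ?_⟩
  rw [← measure_univ (μ := μ)]
  exact (ae_iff_measure_eq (measurableSet_singleton (-c)).nullMeasurableSet).1 hc

theorem Wj_zero_eq_mgf (μ : Measure ℝ) (α : ℝ) : Wj μ 0 α = mgf (fun r => -r) μ α⁻¹ := by
  simp only [Wj, mgf, pow_zero, one_mul, div_eq_inv_mul, mul_neg]

theorem phi_eq_neg_mul_cgf_inv_sub (μ : Measure ℝ) (δ : ℝ) :
    phi μ δ = -(fun α => α * cgf (fun r => -r) μ α⁻¹) - fun α => α * δ := by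
  ext α
  simp [phi, cgf, Wj_zero_eq_mgf]

theorem phi_concaveOn_and_strictConcaveOn_general
    (μ : Measure ℝ) [IsProbabilityMeasure μ]
    (hsupp : ∀ᵐ r ∂μ, r ∈ Set.Icc (0 : ℝ) 1)
    (δ : ℝ) :
    ConcaveOn ℝ (Set.Ioi (0 : ℝ)) (phi μ δ) ∧
      ((¬ ∃ c ∈ Set.Icc (0 : ℝ) 1, μ {c} = 1) →
        StrictConcaveOn ℝ (Set.Ioi (0 : ℝ)) (phi μ δ)) := by
  have hint : Ioi 0 ⊆ integrableExpSet (fun r => -r) μ :=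
    Ioi_subset_Ici_self.trans <|
      Ici_subset_integrableExpSet_neg (hsupp.mono fun _ hr => hr.1) aemeasurable_id
  have hlin : ConvexOn ℝ (Ioi 0) fun α : ℝ => α * δ :=
    (LinearMap.mulRight ℝ δ).convexOn (convex_Ioi 0)
  rw [phi_eq_neg_mul_cgf_inv_sub]
  refine ⟨(convexOn_cgf.subset hint (convex_Ioi 0)).mul_comp_inv.neg.sub hlin, fun hμ => ?_⟩
  exact ((strictConvexOn_cgf (not_neg_ae_eq_const hsupp hμ)).subset hint
    (convex_Ioi 0)).mul_comp_inv.neg.sub_convexOn hlin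

/-- `φ` is concave on `(0, ∞)`, and strictly concave if `μ` is not a Dirac measure. -/
theorem phi_concaveOn_and_strictConcaveOn
    (μ : Measure ℝ) [IsProbabilityMeasure μ]
    (hsupp : ∀ᵐ r ∂μ, r ∈ Set.Icc (0 : ℝ) 1)
    (δ : ℝ) (hδ : 0 < δ) :
    ConcaveOn ℝ (Set.Ioi (0 : ℝ)) (phi μ δ) ∧
      ((¬ ∃ c ∈ Set.Icc (0 : ℝ) 1, μ {c} = 1) →
        StrictConcaveOn ℝ (Set.Ioi (0 : ℝ)) (phi μ δ)) :=
  phi_concaveOn_and_strictConcaveOn_general μ hsupp δ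
end

section
/- Suppose S_w < 1. Then δ < −log S_w if and only if the set {φ̂(α) : α > 0} is not bounded above (i.e., sup_{α>0} φ̂(α) = +∞). -/
open Finset

/-- Weighted DROPE objective `φ̂(α) = -α log((1/N) ∑ᵢ wᵢ exp(-rᵢ/α)) - αδ`. -/
noncomputable def phiHat (N : ℕ) (r w : Fin N → ℝ) (δ : ℝ) (α : ℝ) : ℝ :=
  -α * Real.log ((1 / (N : ℝ)) * ∑ i, w i * Real.exp (-r i / α)) - α * δ

/-- Weight-mean `S_w = (1/N) ∑ᵢ wᵢ`. -/
noncomputable def Sw (N : ℕ) (w : Fin N → ℝ) : ℝ := (1 / (N : ℝ)) * ∑ i, w i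

/-- Minimum reward `m = minᵢ rᵢ`. -/
noncomputable def mMin (N : ℕ) (r : Fin N → ℝ) : ℝ := ⨅ i, r i

/-- Min-reward weight-mean `S_w^m = (1/N) ∑_{i : rᵢ = m} wᵢ`. -/
noncomputable def Swm (N : ℕ) (r w : Fin N → ℝ) : ℝ :=
  (1 / (N : ℝ)) * ∑ i ∈ Finset.univ.filter (fun i => r i = mMin N r), w i

open Real Set

/-!
For `rᵢ ∈ [0, R]` the weighted mean `A(α) = (1/N) ∑ᵢ wᵢ exp(-rᵢ/α)` lies between
`S_w exp(-R/α)` and `S_w`, so `φ̂(α)` stays within `R` above the line `α (-log S_w - δ)`.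
A function trapped in such a strip is unbounded on `(0, ∞)` exactly when the slope is positive.
-/

section WeightedExpSum

variable {ι : Type*} (s : Finset ι) {w r : ι → ℝ} {α : ℝ}

lemma sum_mul_exp_neg_div_le_sum (hw : ∀ i ∈ s, 0 ≤ w i) (hr : ∀ i ∈ s, 0 ≤ r i)
    (hα : 0 ≤ α) : ∑ i ∈ s, w i * exp (-r i / α) ≤ ∑ i ∈ s, w i := by
  refine sum_le_sum fun i hi => mul_le_of_le_one_right (hw i hi) (exp_le_one_iff.2 ?_)
  rw [neg_div, neg_nonpos]
  exact div_nonneg (hr i hi) hα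

lemma sum_mul_exp_neg_div_le_sum_mul_exp {R : ℝ} (hw : ∀ i ∈ s, 0 ≤ w i)
    (hr : ∀ i ∈ s, r i ≤ R) (hα : 0 < α) :
    (∑ i ∈ s, w i) * exp (-R / α) ≤ ∑ i ∈ s, w i * exp (-r i / α) := by
  rw [sum_mul]
  refine sum_le_sum fun i hi => mul_le_mul_of_nonneg_left (exp_le_exp.2 ?_) (hw i hi)
  rw [neg_div, neg_div, neg_le_neg_iff]
  exact div_le_div_of_nonneg_right (hr i hi) hα.le

end WeightedExpSum

lemma neg_mul_log_mem_of_mem_Icc {s a α R : ℝ} (hs : 0 < s) (hα : 0 < α)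
    (ha : a ∈ Icc (s * exp (-R / α)) s) :
    -α * log s ≤ -α * log a ∧ -α * log a ≤ -α * log s + R := by
  have ha_pos : 0 < a := (by positivity : 0 < s * exp (-R / α)).trans_le ha.1
  have h_upper : log a ≤ log s := log_le_log ha_pos ha.2
  have h_lower : log s - R / α ≤ log a := by
    have := log_le_log (by positivity) ha.1
    rwa [log_mul hs.ne' (exp_ne_zero _), log_exp, neg_div, ← sub_eq_add_neg] at this
  constructor
  · nlinarith
  · calc -α * log a ≤ -α * (log s - R / α) := by nlinarith
      _ = -α * log s + R := by field_simp; ring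

theorem phiHat_mem_strip (N : ℕ) {r w : Fin N → ℝ} {R : ℝ} (hr : ∀ i, r i ∈ Icc 0 R)
    (hw : ∀ i, 0 ≤ w i) (δ : ℝ) (hSwpos : 0 < Sw N w) {α : ℝ} (hα : 0 < α) :
    α * (-log (Sw N w) - δ) ≤ phiHat N r w δ α ∧
      phiHat N r w δ α ≤ α * (-log (Sw N w) - δ) + R := by
  have hmean : (1 / (N : ℝ)) * ∑ i, w i * exp (-r i / α) ∈
      Icc (Sw N w * exp (-R / α)) (Sw N w) := by
    rw [Sw, mul_assoc]
    exact ⟨mul_le_mul_of_nonneg_left (sum_mul_exp_neg_div_le_sum_mul_exp _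
        (fun i _ => hw i) (fun i _ => (hr i).2) hα) (by positivity),
      mul_le_mul_of_nonneg_left (sum_mul_exp_neg_div_le_sum _
        (fun i _ => hw i) (fun i _ => (hr i).1) hα.le) (by positivity)⟩
  obtain ⟨h_lower, h_upper⟩ := neg_mul_log_mem_of_mem_Icc hSwpos hα hmean
  rw [phiHat]
  constructor <;> linarith

lemma not_bddAbove_image_Ioi_iff_of_mem_strip {f : ℝ → ℝ} {c K : ℝ}
    (hf : ∀ x > 0, x * c ≤ f x ∧ f x ≤ x * c + K) :
    ¬ BddAbove (f '' Ioi 0) ↔ 0 < c := by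
  constructor
  · intro hunbdd
    by_contra! hc
    refine hunbdd ⟨K, ?_⟩
    rintro _ ⟨x, hx, rfl⟩
    nlinarith [(hf x hx).2, mem_Ioi.1 hx]
  · intro hc
    rw [not_bddAbove_iff]
    intro b
    have hx : 0 < (|b| + 1) / c := by positivity
    refine ⟨f ((|b| + 1) / c), mem_image_of_mem f hx, ?_⟩
    have := (hf _ hx).1
    rw [div_mul_cancel₀ _ hc.ne'] at this
    linarith [le_abs_self b]

theorem phiHat_unbounded_iff_general
    (N : ℕ) (r w : Fin N → ℝ)
    (hr : ∀ i, r i ∈ Set.Icc (0 : ℝ) 1) (hw : ∀ i, 0 ≤ w i)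
    (δ : ℝ) (hSwpos : 0 < Sw N w) :
    δ < -Real.log (Sw N w) ↔ ¬ BddAbove (phiHat N r w δ '' Set.Ioi 0) := by
  rw [not_bddAbove_image_Ioi_iff_of_mem_strip
    (fun α hα => phiHat_mem_strip N hr hw δ hSwpos hα), sub_pos]

/-- If `S_w < 1`, then `δ < -log S_w` iff `φ̂` is unbounded above on `(0, ∞)`. -/
theorem phiHat_unbounded_iff
    (N : ℕ) (hN : 0 < N) (r w : Fin N → ℝ)
    (hr : ∀ i, r i ∈ Set.Icc (0 : ℝ) 1) (hw : ∀ i, 0 ≤ w i)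
    (δ : ℝ) (hδ : 0 < δ) (hSwpos : 0 < Sw N w) (hSw : Sw N w < 1) :
    δ < -Real.log (Sw N w) ↔ ¬ BddAbove (phiHat N r w δ '' Set.Ioi 0) :=
  phiHat_unbounded_iff_general N r w hr hw δ hSwpos
end

section
/- Suppose 0 < S_w^m < 1. (a) If −log S_w^m < δ, then φ̂(α) < m for every α > 0, and sup_{α>0} φ̂(α) = m (the supremum is not attained at any α > 0). (b) If δ < −log S_w^m, then there exists α > 0 with φ̂(α) > m. -/
open Finset

/-!
Factoring `exp (-m/α)` out of the sum gives `φ̂(α) = m - α (log Z(α) + δ)` with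
`Z(α) = (1/N) ∑ᵢ wᵢ exp((m - rᵢ)/α)`. Every term with `rᵢ = m` contributes `wᵢ` and the others
are nonnegative and vanish as `α → 0⁺`, so `Z(α) ≥ S_w^m` and `Z(α) → S_w^m`. Hence
`φ̂(α) → m`, and the sign of `log S_w^m + δ` decides whether `φ̂` stays below `m` or exceeds it
for small `α`.
-/

open Filter Topology Real

section TiltedSum

variable {ι : Type*} [Fintype ι] (r w : ι → ℝ) (m : ℝ)

theorem sum_mul_exp_neg_div_eq (α : ℝ) :
    ∑ i, w i * exp (-r i / α) = exp (-m / α) * ∑ i, w i * exp ((m - r i) / α) := by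
  rw [mul_sum]
  refine sum_congr rfl fun i _ => ?_
  rw [mul_left_comm, ← exp_add, ← add_div]
  ring_nf

variable {r w}

theorem sum_filter_eq_le_sum_mul_exp (hw : ∀ i, 0 ≤ w i) (α : ℝ) :
    ∑ i ∈ univ.filter (r · = m), w i ≤ ∑ i, w i * exp ((m - r i) / α) := by
  calc ∑ i ∈ univ.filter (r · = m), w i
      = ∑ i ∈ univ.filter (r · = m), w i * exp ((m - r i) / α) :=
        sum_congr rfl fun i hi => by simp [(mem_filter.1 hi).2]
    _ ≤ ∑ i, w i * exp ((m - r i) / α) :=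
        sum_le_sum_of_subset_of_nonneg (filter_subset _ _)
          fun i _ _ => mul_nonneg (hw i) (exp_nonneg _)

theorem tendsto_exp_sub_div_nhdsGT_zero {a : ℝ} (ha : m ≤ a) :
    Tendsto (fun α => exp ((m - a) / α)) (𝓝[>] 0) (𝓝 (if a = m then 1 else 0)) := by
  split_ifs with h
  · simp [h]
  · have hneg : m - a < 0 := sub_neg.2 (lt_of_le_of_ne ha (Ne.symm h))
    simpa only [div_eq_mul_inv, Function.comp_def] using
      tendsto_exp_atBot.comp (tendsto_inv_nhdsGT_zero.const_mul_atTop_of_neg hneg)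

theorem tendsto_sum_mul_exp_nhdsGT_zero (hm : ∀ i, m ≤ r i) :
    Tendsto (fun α => ∑ i, w i * exp ((m - r i) / α)) (𝓝[>] 0)
      (𝓝 (∑ i ∈ univ.filter (r · = m), w i)) := by
  rw [sum_filter]
  refine tendsto_finsetSum _ fun i _ => ?_
  simpa using (tendsto_exp_sub_div_nhdsGT_zero m (hm i)).const_mul (w i)

end TiltedSum

noncomputable def tiltedMass (N : ℕ) (r w : Fin N → ℝ) (α : ℝ) : ℝ :=
  (1 / (N : ℝ)) * ∑ i, w i * exp ((mMin N r - r i) / α)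

section Objective

variable {N : ℕ}

theorem mMin_le (r : Fin N → ℝ) (i : Fin N) : mMin N r ≤ r i :=
  ciInf_le (Finite.bddBelow_range r) i

variable {r w : Fin N → ℝ}

theorem Swm_le_tiltedMass (hw : ∀ i, 0 ≤ w i) (α : ℝ) : Swm N r w ≤ tiltedMass N r w α :=
  mul_le_mul_of_nonneg_left (sum_filter_eq_le_sum_mul_exp _ hw α) (by positivity)

theorem tendsto_tiltedMass :
    Tendsto (tiltedMass N r w) (𝓝[>] 0) (𝓝 (Swm N r w)) :=
  (tendsto_sum_mul_exp_nhdsGT_zero _ (mMin_le r)).const_mul _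

theorem phiHat_eq_mMin_sub (δ : ℝ) {α : ℝ} (hα : α ≠ 0) (hZ : tiltedMass N r w α ≠ 0) :
    phiHat N r w δ α = mMin N r - α * (log (tiltedMass N r w α) + δ) := by
  rw [phiHat, sum_mul_exp_neg_div_eq r w (mMin N r), mul_left_comm, ← tiltedMass,
    log_mul (exp_ne_zero _) hZ, log_exp]
  field_simp
  ring

theorem tendsto_log_tiltedMass_add (hSwm : 0 < Swm N r w) (δ : ℝ) :
    Tendsto (fun α => log (tiltedMass N r w α) + δ) (𝓝[>] 0) (𝓝 (log (Swm N r w) + δ)) :=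
  ((continuousAt_log hSwm.ne').tendsto.comp tendsto_tiltedMass).add_const δ

theorem phiHat_eq_mMin_sub_of_pos (hw : ∀ i, 0 ≤ w i) (hSwm : 0 < Swm N r w) (δ : ℝ) {α : ℝ}
    (hα : 0 < α) :
    phiHat N r w δ α = mMin N r - α * (log (tiltedMass N r w α) + δ) :=
  phiHat_eq_mMin_sub δ hα.ne' (hSwm.trans_le (Swm_le_tiltedMass hw α)).ne'

theorem tendsto_phiHat_nhdsGT_zero (hw : ∀ i, 0 ≤ w i) (hSwm : 0 < Swm N r w) (δ : ℝ) :
    Tendsto (phiHat N r w δ) (𝓝[>] 0) (𝓝 (mMin N r)) := by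
  have hα : Tendsto (fun α : ℝ => α) (𝓝[>] 0) (𝓝 0) := nhdsWithin_le_nhds
  have h := tendsto_const_nhds (x := mMin N r) |>.sub
    (hα.mul (tendsto_log_tiltedMass_add hSwm δ))
  rw [zero_mul, sub_zero] at h
  refine h.congr' ?_
  filter_upwards [self_mem_nhdsWithin] with α hα
  exact (phiHat_eq_mMin_sub_of_pos hw hSwm δ hα).symm

theorem phiHat_lt_mMin (hw : ∀ i, 0 ≤ w i) (hSwm : 0 < Swm N r w) {δ : ℝ}
    (hδ : -log (Swm N r w) < δ) {α : ℝ} (hα : 0 < α) :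
    phiHat N r w δ α < mMin N r := by
  have hlog : log (Swm N r w) ≤ log (tiltedMass N r w α) :=
    log_le_log hSwm (Swm_le_tiltedMass hw α)
  rw [phiHat_eq_mMin_sub_of_pos hw hSwm δ hα, sub_lt_self_iff]
  exact mul_pos hα (by linarith)

theorem exists_mMin_lt_phiHat (hw : ∀ i, 0 ≤ w i) (hSwm : 0 < Swm N r w) {δ : ℝ}
    (hδ : δ < -log (Swm N r w)) :
    ∃ α > 0, mMin N r < phiHat N r w δ α := by
  have hev : ∀ᶠ α in 𝓝[>] 0, log (tiltedMass N r w α) + δ < 0 :=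
    (tendsto_log_tiltedMass_add hSwm δ).eventually (gt_mem_nhds (by linarith))
  obtain ⟨α, hneg, hα⟩ := (hev.and self_mem_nhdsWithin).exists
  refine ⟨α, hα, ?_⟩
  rw [phiHat_eq_mMin_sub_of_pos hw hSwm δ hα]
  linarith [mul_neg_of_pos_of_neg hα hneg]

end Objective

theorem phiHat_sup_min_reward_general
    (N : ℕ) (r w : Fin N → ℝ)
    (hw : ∀ i, 0 ≤ w i)
    (δ : ℝ) (hSwm : 0 < Swm N r w) :
    ((-Real.log (Swm N r w) < δ →
        (∀ α > (0 : ℝ), phiHat N r w δ α < mMin N r) ∧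
          IsLUB (phiHat N r w δ '' Set.Ioi 0) (mMin N r)) ∧
      (δ < -Real.log (Swm N r w) →
        ∃ α > (0 : ℝ), mMin N r < phiHat N r w δ α)) := by
  refine ⟨fun hδ => ?_, exists_mMin_lt_phiHat hw hSwm⟩
  have hlt := fun α (hα : α > 0) => phiHat_lt_mMin hw hSwm hδ hα
  refine ⟨hlt, isLUB_of_mem_closure ?_ ?_⟩
  · rintro _ ⟨α, hα, rfl⟩
    exact (hlt α hα).le
  · exact mem_closure_of_tendsto (tendsto_phiHat_nhdsGT_zero hw hSwm δ)
      (eventually_mem_nhdsWithin.mono fun α hα => Set.mem_image_of_mem _ hα)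

/-- Suppose `0 < S_w^m < 1`.
(a) If `-log S_w^m < δ`, then `φ̂(α) < m` for all `α > 0` and `sup_{α>0} φ̂(α) = m`
(the supremum is not attained).
(b) If `δ < -log S_w^m`, then there is `α > 0` with `φ̂(α) > m`. -/
theorem phiHat_sup_min_reward
    (N : ℕ) (hN : 0 < N) (r w : Fin N → ℝ)
    (hr : ∀ i, r i ∈ Set.Icc (0 : ℝ) 1) (hw : ∀ i, 0 ≤ w i)
    (δ : ℝ) (hδ : 0 < δ) (hSwm : 0 < Swm N r w) (hSwm1 : Swm N r w < 1) :
    ((-Real.log (Swm N r w) < δ →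
        (∀ α > (0 : ℝ), phiHat N r w δ α < mMin N r) ∧
          IsLUB (phiHat N r w δ '' Set.Ioi 0) (mMin N r)) ∧
      (δ < -Real.log (Swm N r w) →
        ∃ α > (0 : ℝ), mMin N r < phiHat N r w δ α)) :=
  phiHat_sup_min_reward_general N r w hw δ hSwm
end

section
/- Define E(α) := −log((1/N) ∑_{i=1}^N w_i exp(−r_i/α)) − (∑_{i=1}^N w_i (r_i/α) exp(−r_i/α)) / (∑_{i=1}^N w_i exp(−r_i/α)) for α > 0. If S_w^m > 0, then E(α) tends to −log S_w^m as α → 0⁺. -/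
/-!
Shifting all rewards by their minimum `m` multiplies the partition sum `∑ wᵢ exp(-rᵢ/α)` by
`exp(-m/α)`, and the two resulting contributions `m/α` to `E(α)` cancel, so one may assume
`m = 0`. Then every term with `rᵢ > 0` of the partition sum and of the energy sum
`∑ wᵢ (rᵢ/α) exp(-rᵢ/α)` vanishes as `α → 0⁺`, because `exp(-x)` and `x exp(-x)` vanish
at infinity; only the weights of the minimisers survive.
-/

open Finset

open Real Filter Topology

section

variable {ι : Type*} [Fintype ι]

noncomputable def partitionSum (r w : ι → ℝ) (α : ℝ) : ℝ :=
  ∑ i, w i * exp (-r i / α)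

noncomputable def energySum (r w : ι → ℝ) (α : ℝ) : ℝ :=
  ∑ i, w i * (r i / α) * exp (-r i / α)

/-- With `c = 1/N`, this is `φ̂'(α) + δ`. -/
noncomputable def dropeE (r w : ι → ℝ) (c α : ℝ) : ℝ :=
  -log (c * partitionSum r w α) - energySum r w α / partitionSum r w α

lemma tendsto_exp_neg_div_nhdsGT_zero {c : ℝ} (hc : 0 < c) :
    Tendsto (fun α => exp (-c / α)) (𝓝[>] 0) (𝓝 0) := by
  refine (tendsto_exp_neg_atTop_nhds_zero.comp
    (tendsto_inv_nhdsGT_zero.const_mul_atTop hc)).congr fun α => ?_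
  simp [div_eq_mul_inv]

lemma tendsto_div_mul_exp_neg_div_nhdsGT_zero {c : ℝ} (hc : 0 ≤ c) :
    Tendsto (fun α => c / α * exp (-c / α)) (𝓝[>] 0) (𝓝 0) := by
  rcases hc.eq_or_lt with rfl | hc
  · simp
  have hx : Tendsto (fun x => x * exp (-x)) atTop (𝓝 0) := by
    simpa using tendsto_pow_mul_exp_neg_atTop_nhds_zero 1
  refine (hx.comp (tendsto_inv_nhdsGT_zero.const_mul_atTop hc)).congr fun α => ?_
  simp [div_eq_mul_inv]

lemma exp_neg_div_eq_mul_exp_neg_sub_div (x m α : ℝ) :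
    exp (-x / α) = exp (-m / α) * exp (-(x - m) / α) := by
  rw [← exp_add]
  ring_nf

lemma partitionSum_eq_exp_mul_partitionSum_sub (r w : ι → ℝ) (m α : ℝ) :
    partitionSum r w α = exp (-m / α) * partitionSum (fun i => r i - m) w α := by
  simp only [partitionSum, mul_sum]
  refine sum_congr rfl fun i _ => ?_
  rw [exp_neg_div_eq_mul_exp_neg_sub_div (r i) m]
  ring

lemma energySum_eq_exp_mul_energySum_sub (r w : ι → ℝ) (m α : ℝ) :
    energySum r w α = exp (-m / α) *
      (energySum (fun i => r i - m) w α + m / α * partitionSum (fun i => r i - m) w α) := by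
  simp only [energySum, partitionSum, mul_sum, ← sum_add_distrib]
  refine sum_congr rfl fun i _ => ?_
  rw [exp_neg_div_eq_mul_exp_neg_sub_div (r i) m]
  ring

lemma dropeE_eq_dropeE_sub {r w : ι → ℝ} {c α : ℝ} (m : ℝ) (hc : c ≠ 0)
    (hZ : partitionSum (fun i => r i - m) w α ≠ 0) :
    dropeE r w c α = dropeE (fun i => r i - m) w c α := by
  have he : exp (-m / α) ≠ 0 := (exp_pos _).ne'
  rw [dropeE, dropeE, partitionSum_eq_exp_mul_partitionSum_sub r w m,
    energySum_eq_exp_mul_energySum_sub r w m, mul_left_comm c,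
    log_mul he (mul_ne_zero hc hZ), log_exp, mul_div_mul_left _ _ he, add_div,
    mul_div_assoc, div_self hZ, mul_one]
  ring

lemma tendsto_partitionSum {r : ι → ℝ} (w : ι → ℝ) (hr : ∀ i, 0 ≤ r i) :
    Tendsto (partitionSum r w) (𝓝[>] 0) (𝓝 (∑ i ∈ univ.filter (fun i => r i = 0), w i)) := by
  rw [sum_filter]
  refine tendsto_finsetSum _ fun i _ => ?_
  split_ifs with h
  · simp [h]
  · simpa using ((tendsto_exp_neg_div_nhdsGT_zero ((hr i).lt_of_ne' h)).const_mul (w i))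

lemma tendsto_energySum {r : ι → ℝ} (w : ι → ℝ) (hr : ∀ i, 0 ≤ r i) :
    Tendsto (energySum r w) (𝓝[>] 0) (𝓝 0) := by
  rw [← sum_const_zero (s := (univ : Finset ι))]
  refine tendsto_finsetSum _ fun i _ => ?_
  simpa [mul_assoc] using (tendsto_div_mul_exp_neg_div_nhdsGT_zero (hr i)).const_mul (w i)

lemma tendsto_dropeE_of_nonneg {r w : ι → ℝ} {c : ℝ} (hr : ∀ i, 0 ≤ r i)
    (h : c * ∑ i ∈ univ.filter (fun i => r i = 0), w i ≠ 0) :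
    Tendsto (dropeE r w c) (𝓝[>] 0)
      (𝓝 (-log (c * ∑ i ∈ univ.filter (fun i => r i = 0), w i))) := by
  have hZ := tendsto_partitionSum w hr
  have hlim := ((tendsto_const_nhds.mul hZ).log h).neg.sub
    ((tendsto_energySum w hr).div hZ (right_ne_zero_of_mul h))
  rwa [zero_div, sub_zero] at hlim

lemma tendsto_dropeE {r w : ι → ℝ} {c m : ℝ} (hm : ∀ i, m ≤ r i)
    (h : c * ∑ i ∈ univ.filter (fun i => r i = m), w i ≠ 0) :
    Tendsto (dropeE r w c) (𝓝[>] 0)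
      (𝓝 (-log (c * ∑ i ∈ univ.filter (fun i => r i = m), w i))) := by
  have hshift : ∀ i, 0 ≤ r i - m := fun i => sub_nonneg.2 (hm i)
  simp_rw [← sub_eq_zero (b := m)] at h ⊢
  refine (tendsto_dropeE_of_nonneg hshift h).congr' ?_
  filter_upwards [(tendsto_partitionSum w hshift).eventually_ne (right_ne_zero_of_mul h)]
    with α hZ
  exact (dropeE_eq_dropeE_sub m (left_ne_zero_of_mul h) hZ).symm

end

theorem E_tendsto_zero_right_general
    (N : ℕ) (r w : Fin N → ℝ)
    (hSwm : 0 < Swm N r w) :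
    Filter.Tendsto
      (fun α : ℝ =>
        -Real.log ((1 / (N : ℝ)) * ∑ i, w i * Real.exp (-r i / α)) -
          (∑ i, w i * (r i / α) * Real.exp (-r i / α)) /
            (∑ i, w i * Real.exp (-r i / α)))
      (nhdsWithin 0 (Set.Ioi 0)) (nhds (-Real.log (Swm N r w))) :=
  tendsto_dropeE (fun i => ciInf_le (Set.finite_range r).bddBelow i) hSwm.ne'

/-- If `S_w^m > 0`, then the quantity `E(α) = -log((1/N) ∑ᵢ wᵢ exp(-rᵢ/α)) -
(∑ᵢ wᵢ (rᵢ/α) exp(-rᵢ/α)) / (∑ᵢ wᵢ exp(-rᵢ/α))` tends to `-log S_w^m` as `α → 0⁺`. -/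
theorem E_tendsto_zero_right
    (N : ℕ) (hN : 0 < N) (r w : Fin N → ℝ)
    (hr : ∀ i, r i ∈ Set.Icc (0 : ℝ) 1) (hw : ∀ i, 0 ≤ w i)
    (hSwm : 0 < Swm N r w) :
    Filter.Tendsto
      (fun α : ℝ =>
        -Real.log ((1 / (N : ℝ)) * ∑ i, w i * Real.exp (-r i / α)) -
          (∑ i, w i * (r i / α) * Real.exp (-r i / α)) /
            (∑ i, w i * Real.exp (-r i / α)))
      (nhdsWithin 0 (Set.Ioi 0)) (nhds (-Real.log (Swm N r w))) :=
  E_tendsto_zero_right_general N r w hSwm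
end
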